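/- arXiv:1901.05056 — 2 statements merged into one kernel-verified Lean document; each statement's English description precedes it below -/
import Mathlib

section
/- Let X_n and X_0 be real-valued measurable functions of W and A a {0,1}-valued random variable. Define f_{0|n0}(u,v) = E[A | X_n(W)=u, X_0(W)=v] and f_{0|n}(u) = E[A | X_n(W)=u]. If f_{0|n0} is differentiable in its second coordinate with |∂/∂v f_{0|n0}(u,v)| ≤ C uniformly over the support, then ‖f_{0|n0}(X_n, X_0) − f_{0|n}(X_n)‖²_{L²(P₀)} ≤ C² ‖X_n − X_0‖²_{L²(P₀)}. -/
open MeasureTheory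

/-- Lemma 1 of the paper: if `f_{0|n0}(u,v) = E[A | Xₙ = u, X₀ = v]` is differentiable in its
second coordinate with uniformly bounded derivative, then
`‖f_{0|n0}(Xₙ, X₀) − f_{0|n}(Xₙ)‖²_{L²(P₀)} ≤ C² ‖Xₙ − X₀‖²_{L²(P₀)}`,
where `f_{0|n}(u) = E[A | Xₙ = u]`. -/
theorem conditional_mean_coarsening_bound
    {Ω : Type*} [MeasurableSpace Ω] (P : Measure Ω) [IsProbabilityMeasure P]
    (Xn X0 A : Ω → ℝ)
    (hXn : Measurable Xn) (hX0 : Measurable X0) (hA : Measurable A)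
    (hAbin : ∀ ω, A ω = 0 ∨ A ω = 1)
    (hX : Integrable (fun ω => (Xn ω - X0 ω) ^ 2) P)
    (f : ℝ × ℝ → ℝ) (hfm : Measurable f)
    -- f(Xₙ, X₀) is a version of E[A | Xₙ, X₀]
    (hfver : (fun ω => f (Xn ω, X0 ω))
        =ᵐ[P] P[A | MeasurableSpace.comap (fun ω => (Xn ω, X0 ω)) inferInstance])
    (fn : ℝ → ℝ) (hfnm : Measurable fn)
    -- fₙ(Xₙ) is a version of E[A | Xₙ]
    (hfnver : (fun ω => fn (Xn ω)) =ᵐ[P] P[A | MeasurableSpace.comap Xn inferInstance])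
    (C : ℝ) (f' : ℝ → ℝ → ℝ)
    (hderiv : ∀ u v, HasDerivAt (fun t => f (u, t)) (f' u v) v)
    (hC : ∀ u v, |f' u v| ≤ C) :
    ∫ ω, (f (Xn ω, X0 ω) - fn (Xn ω)) ^ 2 ∂P ≤ C ^ 2 * ∫ ω, (Xn ω - X0 ω) ^ 2 ∂P := by
  classical
  rename_i mΩ hPP
  have hm1 : MeasurableSpace.comap Xn inferInstance ≤ mΩ :=
    hXn.comap_le
  have hm2 : MeasurableSpace.comap (fun ω => (Xn ω, X0 ω)) inferInstance
      ≤ mΩ := (hXn.prodMk hX0).comap_le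
  set m1 : MeasurableSpace Ω := MeasurableSpace.comap Xn inferInstance with hm1def
  set m2 : MeasurableSpace Ω :=
    MeasurableSpace.comap (fun ω => (Xn ω, X0 ω)) inferInstance with hm2def
  have hle : m1 ≤ m2 := by
    rw [hm1def, hm2def]
    have : Xn = Prod.fst ∘ (fun ω => (Xn ω, X0 ω)) := rfl
    rw [this, ← MeasurableSpace.comap_comp]
    exact MeasurableSpace.comap_mono measurable_fst.comap_le
  have hC0 : 0 ≤ C := le_trans (abs_nonneg _) (hC 0 0)
  -- notation
  set Y : Ω → ℝ := fun ω => f (Xn ω, X0 ω) with hYdef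
  set Z : Ω → ℝ := fun ω => fn (Xn ω) with hZdef
  set G : Ω → ℝ := fun ω => f (Xn ω, Xn ω) with hGdef
  have hYm : Measurable[mΩ] Y := hfm.comp (hXn.prodMk hX0)
  have hZm : Measurable[mΩ] Z := hfnm.comp hXn
  have hGm : Measurable[mΩ] G := hfm.comp (hXn.prodMk hXn)
  -- MVT bound
  have hMVT : ∀ ω, |Y ω - G ω| ≤ C * |X0 ω - Xn ω| := by
    intro ω
    have := Convex.norm_image_sub_le_of_norm_hasDerivWithin_le
      (f := fun t => f (Xn ω, t)) (f' := fun t => f' (Xn ω) t) (s := Set.univ)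
      (fun x _ => (hderiv (Xn ω) x).hasDerivWithinAt)
      (fun x _ => (hC (Xn ω) x)) convex_univ (Set.mem_univ (Xn ω)) (Set.mem_univ (X0 ω))
    simpa [Real.norm_eq_abs] using this
  have hsq : ∀ ω, (Y ω - G ω) ^ 2 ≤ C ^ 2 * (Xn ω - X0 ω) ^ 2 := by
    intro ω
    have h := hMVT ω
    calc (Y ω - G ω) ^ 2 = |Y ω - G ω| ^ 2 := (sq_abs _).symm
      _ ≤ (C * |X0 ω - Xn ω|) ^ 2 := by
          apply pow_le_pow_left₀ (abs_nonneg _) h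
      _ = C ^ 2 * (Xn ω - X0 ω) ^ 2 := by
          rw [mul_pow, sq_abs]; ring_nf
  -- integrability of A
  have hAint : Integrable A P := by
    refine Integrable.mono' (integrable_const 1) hA.aestronglyMeasurable (μ := P) ?_
    filter_upwards with ω
    rcases hAbin ω with h | h <;> simp [h]
  have hA0 : 0 ≤ᵐ[P] A := by
    filter_upwards with ω; rcases hAbin ω with h | h <;> simp [h]
  have hA1 : A ≤ᵐ[P] fun _ => (1 : ℝ) := by
    filter_upwards with ω; rcases hAbin ω with h | h <;> simp [h]
  -- 0 ≤ Y ≤ 1 a.e., 0 ≤ Z ≤ 1 a.e.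
  have hbound : ∀ (m : MeasurableSpace Ω), m ≤ mΩ →
      ∀ᵐ ω ∂P, |(P[A|m]) ω| ≤ 1 := by
    intro m hm
    have h0 : 0 ≤ᵐ[P] P[A|m] := condExp_nonneg hA0
    have h1 : P[A|m] ≤ᵐ[P] P[(fun _ => (1 : ℝ))|m] :=
      condExp_mono hAint (integrable_const 1) hA1
    rw [condExp_const (μ := P) hm (1:ℝ)] at h1
    filter_upwards [h0, h1] with ω h0 h1
    simp only [Pi.zero_apply] at h0
    rw [abs_le]; exact ⟨by linarith, h1⟩
  have hYb : ∀ᵐ ω ∂P, |Y ω| ≤ 1 := by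
    filter_upwards [hfver, hbound m2 hm2] with ω h1 h2
    rw [show Y ω = (P[A|m2]) ω from h1]; exact h2
  have hZb : ∀ᵐ ω ∂P, |Z ω| ≤ 1 := by
    filter_upwards [hfnver, hbound m1 hm1] with ω h1 h2
    rw [show Z ω = (P[A|m1]) ω from h1]; exact h2
  -- tower: Z =ᵐ E[Y | m1]
  have hsigma : SigmaFinite (P.trim hm2) := by
    exact (isFiniteMeasure_trim hm2).toSigmaFinite
  have htower : Z =ᵐ[P] P[Y|m1] := by
    have h1 : P[Y|m1] =ᵐ[P] P[P[A|m2]|m1] := condExp_congr_ae hfver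
    have h2 : P[P[A|m2]|m1] =ᵐ[P] P[A|m1] := condExp_condExp_of_le hle hm2
    exact hfnver.trans (h1.trans h2).symm
  -- integrability facts
  have hYint : Integrable Y P :=
    Integrable.mono' (integrable_const 1) hYm.aestronglyMeasurable hYb
  have hYsubG : Integrable (fun ω => (Y ω - G ω) ^ 2) P := by
    refine Integrable.mono' (hX.const_mul (C ^ 2)) ((hYm.sub hGm).pow_const 2).aestronglyMeasurable (μ := P) ?_
    filter_upwards with ω
    rw [Real.norm_eq_abs, abs_of_nonneg (sq_nonneg _)]; exact hsq ω
  have hYG1 : Integrable (fun ω => Y ω - G ω) P := by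
    have : Integrable (fun ω => |Y ω - G ω|) P := by
      refine Integrable.mono' ((hX.const_mul (C ^ 2)).add (integrable_const 1)) ?_ ?_
      · exact (measurable_abs.comp (hYm.sub hGm)).aestronglyMeasurable (μ := P)
      · filter_upwards with ω
        have h := hsq ω
        simp only [Pi.add_apply, Real.norm_eq_abs, abs_abs]
        nlinarith [sq_abs (Y ω - G ω), sq_nonneg (|Y ω - G ω| - 1)]
    exact this.mono' ((hYm.sub hGm)).aestronglyMeasurable (μ := P)
      (by filter_upwards with ω; simp [Real.norm_eq_abs])
  have hGint : Integrable G P := by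
    have : G = fun ω => Y ω - (Y ω - G ω) := by funext ω; ring
    rw [this]; exact hYint.sub hYG1
  have hYZsq : Integrable (fun ω => (Y ω - Z ω) ^ 2) P := by
    refine Integrable.mono' (integrable_const 4) ((hYm.sub hZm).pow_const 2).aestronglyMeasurable (μ := P) ?_
    filter_upwards [hYb, hZb] with ω h1 h2
    rw [Real.norm_eq_abs, abs_of_nonneg (sq_nonneg _)]
    nlinarith [abs_le.mp h1, abs_le.mp h2]
  have hZGsq : Integrable (fun ω => (Z ω - G ω) ^ 2) P := by
    have key : ∀ ω, (Z ω - G ω) ^ 2 ≤ 2 * (Y ω - Z ω) ^ 2 + 2 * (Y ω - G ω) ^ 2 := by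
      intro ω; nlinarith [sq_nonneg (Y ω - Z ω - (Y ω - G ω)), sq_nonneg ((Y ω - Z ω) + (Y ω - G ω))]
    refine Integrable.mono' ((hYZsq.const_mul 2).add (hYsubG.const_mul 2))
      ((hZm.sub hGm).pow_const 2).aestronglyMeasurable (μ := P) ?_
    filter_upwards with ω
    rw [Real.norm_eq_abs, abs_of_nonneg (sq_nonneg _)]; exact key ω
  -- h := Z - G is in L², m1-measurable
  have hZG1 : Integrable (fun ω => Z ω - G ω) P := by
    have hZint : Integrable Z P :=
      Integrable.mono' (integrable_const 1) hZm.aestronglyMeasurable hZb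
    exact hZint.sub hGint
  have hHsm : StronglyMeasurable[m1] (fun ω => Z ω - G ω) := by
    have hXn1 : Measurable[m1] Xn := by
      rw [hm1def]; exact fun s hs => ⟨s, hs, rfl⟩
    have : Measurable[m1] (fun ω => Z ω - G ω) := by
      have hg : Measurable (fun u : ℝ => fn u - f (u, u)) :=
        hfnm.sub (hfm.comp (measurable_id.prodMk measurable_id))
      exact hg.comp hXn1
    exact this.stronglyMeasurable
  -- cross term is zero
  have hHY : Integrable (fun ω => (Z ω - G ω) * Y ω) P := by
    refine Integrable.mono' (hZG1.abs) ((hZm.sub hGm).mul hYm).aestronglyMeasurable (μ := P) ?_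
    filter_upwards [hYb] with ω h1
    rw [Real.norm_eq_abs, abs_mul]
    calc |Z ω - G ω| * |Y ω| ≤ |Z ω - G ω| * 1 := by
          exact mul_le_mul_of_nonneg_left h1 (abs_nonneg _)
      _ = |Z ω - G ω| := mul_one _
  have hHZ : Integrable (fun ω => (Z ω - G ω) * Z ω) P := by
    refine Integrable.mono' (hZG1.abs) ((hZm.sub hGm).mul hZm).aestronglyMeasurable (μ := P) ?_
    filter_upwards [hZb] with ω h1
    rw [Real.norm_eq_abs, abs_mul]
    calc |Z ω - G ω| * |Z ω| ≤ |Z ω - G ω| * 1 := by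
          exact mul_le_mul_of_nonneg_left h1 (abs_nonneg _)
      _ = |Z ω - G ω| := mul_one _
  have hcross : ∫ ω, (Y ω - Z ω) * (Z ω - G ω) ∂P = 0 := by
    have hpull : P[fun ω => (Z ω - G ω) * Y ω|m1]
        =ᵐ[P] fun ω => (Z ω - G ω) * (P[Y|m1]) ω :=
      condExp_mul_of_stronglyMeasurable_left hHsm hHY hYint
    have h1 : ∫ ω, (Z ω - G ω) * Y ω ∂P = ∫ ω, (Z ω - G ω) * (P[Y|m1]) ω ∂P := by
      rw [← integral_condExp (μ := P) hm1 (f := fun ω => (Z ω - G ω) * Y ω)]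
      exact integral_congr_ae hpull
    have h2 : ∫ ω, (Z ω - G ω) * (P[Y|m1]) ω ∂P = ∫ ω, (Z ω - G ω) * Z ω ∂P := by
      refine integral_congr_ae ?_
      filter_upwards [htower] with ω hω
      rw [← hω]
    have h3 : (fun ω => (Y ω - Z ω) * (Z ω - G ω))
        = fun ω => (Z ω - G ω) * Y ω - (Z ω - G ω) * Z ω := by
      funext ω; ring
    rw [h3, integral_sub hHY hHZ, h1, h2, sub_self]
  -- Pythagoras
  have hident : (fun ω => (Y ω - G ω) ^ 2)
      = fun ω => (Y ω - Z ω) ^ 2 + (2 * ((Y ω - Z ω) * (Z ω - G ω)) + (Z ω - G ω) ^ 2) := by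
    funext ω; ring
  have hcrossint : Integrable (fun ω => (Y ω - Z ω) * (Z ω - G ω)) P := by
    have : (fun ω => (Y ω - Z ω) * (Z ω - G ω))
        = fun ω => (Z ω - G ω) * Y ω - (Z ω - G ω) * Z ω := by funext ω; ring
    rw [this]; exact hHY.sub hHZ
  have hsplit : ∫ ω, (Y ω - G ω) ^ 2 ∂P
      = ∫ ω, (Y ω - Z ω) ^ 2 ∂P + (2 * ∫ ω, (Y ω - Z ω) * (Z ω - G ω) ∂P
        + ∫ ω, (Z ω - G ω) ^ 2 ∂P) := by
    have hc2 : Integrable (fun ω => 2 * ((Y ω - Z ω) * (Z ω - G ω))) P :=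
      hcrossint.const_mul 2
    have hsum : Integrable
        (fun ω => 2 * ((Y ω - Z ω) * (Z ω - G ω)) + (Z ω - G ω) ^ 2) P := hc2.add hZGsq
    rw [hident, integral_add hYZsq hsum, integral_add hc2 hZGsq, integral_const_mul]
  have hproj : ∫ ω, (Y ω - Z ω) ^ 2 ∂P ≤ ∫ ω, (Y ω - G ω) ^ 2 ∂P := by
    rw [hsplit, hcross]
    have : 0 ≤ ∫ ω, (Z ω - G ω) ^ 2 ∂P := integral_nonneg fun ω => sq_nonneg _
    linarith
  calc ∫ ω, (f (Xn ω, X0 ω) - fn (Xn ω)) ^ 2 ∂P = ∫ ω, (Y ω - Z ω) ^ 2 ∂P := rfl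
    _ ≤ ∫ ω, (Y ω - G ω) ^ 2 ∂P := hproj
    _ ≤ ∫ ω, C ^ 2 * (Xn ω - X0 ω) ^ 2 ∂P :=
        integral_mono hYsubG (hX.const_mul _) hsq
    _ = C ^ 2 * ∫ ω, (Xn ω - X0 ω) ^ 2 ∂P := integral_const_mul _ _
end

section
/- Variance inequality for asymptotic super-efficiency in the homoscedastic case: if σ²(w) := Var(Y | A=1, W=w) and both σ² and Q̄₀ are measurable with respect to σ(Q̄₀(W)), then τ₀² = E[σ²(W)/Ḡ₀(W|Q̄₀)] + Var(Q̄₀(W)) ≤ E[σ²(W)/Ḡ₀(W)] + Var(Q̄₀(W)) = σ₀², where Ḡ₀(·|Q̄₀) = E[Ḡ₀(W) | Q̄₀(W)]. -/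
/-!
Write `D_g = A / g · (Y - Q̄₀) + Q̄₀ - c`. Since `A² = A`,
`D_g² = A (Y - Q̄₀)² / g² + 2 (Q̄₀ - c) / g · A (Y - Q̄₀) + (Q̄₀ - c)²`,
and for a `σ(W)`-measurable `g` the pull-out property replaces `A (Y - Q̄₀)²` by
`E[A (Y - Q̄₀)² | W] = σ² Ḡ₀` and `A (Y - Q̄₀)` by its conditional mean `0`.
For `g = Ḡ₀` this is `E[σ²/Ḡ₀]`; for `g = Ḡ₀(·|Q̄₀)` the tower property over `σ(Q̄₀(W))`
turns `E[σ² Ḡ₀ / g²]` into `E[σ² / g]`. The inequality is conditional Jensen for `x ↦ 1/x`: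
integrate the tangent-line bound `2/a - x/a² ≤ 1/x` at `a = Ḡ₀(W|Q̄₀)`, `x = Ḡ₀(W)` against
`σ² ≥ 0` and use the same tower identity.
-/

open MeasureTheory Filter

theorem abs_div_le_div_of_le {x y a δ : ℝ} (hδ : 0 < δ) (hx : |x| ≤ a) (hy : δ ≤ y) :
    |x / y| ≤ a / δ := by
  rw [abs_div, abs_of_pos (hδ.trans_le hy)]
  exact div_le_div₀ ((abs_nonneg x).trans hx) hx hδ hy

theorem two_div_sub_div_sq_le_inv {a x : ℝ} (ha : 0 < a) (hx : 0 < x) :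
    2 / a - x / a ^ 2 ≤ 1 / x := by
  have hgap : 1 / x - (2 / a - x / a ^ 2) = (x - a) ^ 2 / (a ^ 2 * x) := by
    field_simp
    ring
  have : 0 ≤ (x - a) ^ 2 / (a ^ 2 * x) := by positivity
  linarith

section CondExp

variable {Ω : Type*} {m m0 : MeasurableSpace Ω} {μ : Measure Ω}

theorem MeasureTheory.Integrable.mul_div_of_abs_le {f x y : Ω → ℝ} {a δ : ℝ}
    (hf : Integrable f μ) (hx : Measurable x) (hy : Measurable y) (hδ : 0 < δ)
    (hxa : ∀ ω, |x ω| ≤ a) (hyδ : ∀ ω, δ ≤ y ω) : Integrable (fun ω => f ω * x ω / y ω) μ :=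
  hf.mul_bdd (hx.div hy).aestronglyMeasurable
    (ae_of_all _ fun ω => abs_div_le_div_of_le hδ (hxa ω) (hyδ ω)) |>.congr
    (ae_of_all _ fun ω => by simp only [Pi.div_apply]; ring)

theorem MeasureTheory.Integrable.of_mul_of_le {f G : Ω → ℝ} {δ : ℝ} (hδ : 0 < δ)
    (hfG : Integrable (fun ω => f ω * G ω) μ) (hG : Measurable G) (hGδ : ∀ ω, δ ≤ G ω) :
    Integrable f μ :=
  (hfG.mul_div_of_abs_le measurable_const hG hδ (fun _ => abs_one.le) hGδ).congr
    (ae_of_all _ fun ω => by field_simp [(hδ.trans_le (hGδ ω)).ne'])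

theorem integral_mul_eq_integral_mul_of_ae_eq_condExp (hm : m ≤ m0) [SigmaFinite (μ.trim hm)]
    {h f g : Ω → ℝ} (hh : StronglyMeasurable[m] h) (hhf : Integrable (fun ω => h ω * f ω) μ)
    (hf : Integrable f μ) (hg : g =ᵐ[μ] μ[f|m]) :
    ∫ ω, h ω * f ω ∂μ = ∫ ω, h ω * g ω ∂μ :=
  calc ∫ ω, h ω * f ω ∂μ = ∫ ω, (μ[h * f|m]) ω ∂μ := (integral_condExp hm).symm
    _ = ∫ ω, h ω * g ω ∂μ := integral_congr_ae <|
        (condExp_mul_of_stronglyMeasurable_left hh hhf hf).trans (EventuallyEq.rfl.mul hg.symm)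

variable [IsFiniteMeasure μ]

section Propensity

variable {δ : ℝ} {σ G Gc : Ω → ℝ}

theorem integral_mul_div_sq_eq_integral_div_of_ae_eq_condExp (hm : m ≤ m0) (hδ : 0 < δ)
    (hσ : Measurable[m] σ) (hσi : Integrable σ μ)
    (hG : Measurable G) (hG1 : ∀ ω, |G ω| ≤ 1)
    (hGc : Measurable[m] Gc) (hGcδ : ∀ ω, δ ≤ Gc ω) (hGcG : Gc =ᵐ[μ] μ[G|m]) :
    ∫ ω, σ ω * G ω / Gc ω ^ 2 ∂μ = ∫ ω, σ ω / Gc ω ∂μ := by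
  have hint : Integrable (fun ω => σ ω / Gc ω ^ 2 * G ω) μ :=
    (hσi.mul_div_of_abs_le hG ((hGc.mono hm le_rfl).pow_const 2) (pow_pos hδ 2) hG1
      fun ω => pow_le_pow_left₀ hδ.le (hGcδ ω) 2).congr (ae_of_all _ fun ω => by ring)
  calc ∫ ω, σ ω * G ω / Gc ω ^ 2 ∂μ = ∫ ω, σ ω / Gc ω ^ 2 * G ω ∂μ := by
        congr 1 with ω; ring
    _ = ∫ ω, σ ω / Gc ω ^ 2 * Gc ω ∂μ :=
        integral_mul_eq_integral_mul_of_ae_eq_condExp hm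
          (hσ.div (hGc.pow_const 2)).stronglyMeasurable hint
          (.of_bound hG.aestronglyMeasurable 1 (ae_of_all _ hG1)) hGcG
    _ = ∫ ω, σ ω / Gc ω ∂μ := by
        congr 1 with ω
        field_simp [(hδ.trans_le (hGcδ ω)).ne']

theorem integral_div_le_integral_div_of_ae_eq_condExp (hm : m ≤ m0) (hδ : 0 < δ)
    (hσ : Measurable[m] σ) (hσi : Integrable σ μ) (hσ0 : ∀ ω, 0 ≤ σ ω)
    (hG : Measurable G) (hGr : ∀ ω, G ω ∈ Set.Icc δ 1)
    (hGc : Measurable[m] Gc) (hGcδ : ∀ ω, δ ≤ Gc ω) (hGcG : Gc =ᵐ[μ] μ[G|m]) :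
    ∫ ω, σ ω / Gc ω ∂μ ≤ ∫ ω, σ ω / G ω ∂μ := by
  have hG1 : ∀ ω, |G ω| ≤ 1 := fun ω => abs_le.2 ⟨by linarith [(hGr ω).1], (hGr ω).2⟩
  have hi1 : Integrable (fun ω => σ ω / Gc ω) μ := by
    simpa using hσi.mul_div_of_abs_le measurable_const (hGc.mono hm le_rfl) hδ
      (fun _ => abs_one.le) hGcδ
  have hi2 : Integrable (fun ω => σ ω * G ω / Gc ω ^ 2) μ :=
    hσi.mul_div_of_abs_le hG ((hGc.mono hm le_rfl).pow_const 2) (pow_pos hδ 2) hG1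
      fun ω => pow_le_pow_left₀ hδ.le (hGcδ ω) 2
  have hi3 : Integrable (fun ω => σ ω / G ω) μ := by
    simpa using hσi.mul_div_of_abs_le measurable_const hG hδ (fun _ => abs_one.le)
      fun ω => (hGr ω).1
  calc ∫ ω, σ ω / Gc ω ∂μ
      = ∫ ω, 2 * (σ ω / Gc ω) - σ ω * G ω / Gc ω ^ 2 ∂μ := by
        rw [integral_sub (hi1.const_mul 2) hi2, integral_const_mul,
          integral_mul_div_sq_eq_integral_div_of_ae_eq_condExp hm hδ hσ hσi hG hG1 hGc hGcδ
            hGcG]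
        ring
    _ ≤ ∫ ω, σ ω / G ω ∂μ := by
        refine integral_mono ((hi1.const_mul 2).sub hi2) hi3 fun ω => ?_
        calc 2 * (σ ω / Gc ω) - σ ω * G ω / Gc ω ^ 2
            = σ ω * (2 / Gc ω - G ω / Gc ω ^ 2) := by ring
          _ ≤ σ ω * (1 / G ω) := mul_le_mul_of_nonneg_left
              (two_div_sub_div_sq_le_inv (hδ.trans_le (hGcδ ω)) (hδ.trans_le (hGr ω).1)) (hσ0 ω)
          _ = σ ω / G ω := by ring

end Propensity

section Residual

variable {A Y q G σ : Ω → ℝ} {C : ℝ}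

theorem condExp_mul_sub_ae_eq_zero (hm : m ≤ m0) (hAi : Integrable A μ)
    (hAYi : Integrable (fun ω => A ω * Y ω) μ)
    (hq : Measurable[m] q) (hqC : ∀ ω, |q ω| ≤ C)
    (hG : G =ᵐ[μ] μ[A|m]) (hqG : (fun ω => q ω * G ω) =ᵐ[μ] μ[fun ω => A ω * Y ω|m]) :
    μ[fun ω => A ω * (Y ω - q ω)|m] =ᵐ[μ] 0 := by
  have hqAi : Integrable (q * A) μ :=
    hAi.bdd_mul (hq.mono hm le_rfl).aestronglyMeasurable (ae_of_all _ hqC)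
  have hsplit : (fun ω => A ω * (Y ω - q ω)) = (fun ω => A ω * Y ω) - q * A := by
    ext ω; simp only [Pi.sub_apply, Pi.mul_apply]; ring
  rw [hsplit]
  filter_upwards [condExp_sub hAYi hqAi m,
    condExp_stronglyMeasurable_mul_of_bound hm hq.stronglyMeasurable hAi C (ae_of_all _ hqC),
    hG, hqG] with ω hsub hpull hGω hqGω
  simp only [Pi.sub_apply, Pi.mul_apply, Pi.zero_apply] at hsub hpull ⊢
  rw [hsub, hpull, ← hGω, ← hqGω, sub_self]

theorem condExp_mul_sub_sq_ae_eq (hm : m ≤ m0) (hAi : Integrable A μ)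
    (hAYi : Integrable (fun ω => A ω * Y ω) μ)
    (hAY2i : Integrable (fun ω => A ω * Y ω ^ 2) μ)
    (hq : Measurable[m] q) (hqC : ∀ ω, |q ω| ≤ C)
    (hG : G =ᵐ[μ] μ[A|m]) (hqG : (fun ω => q ω * G ω) =ᵐ[μ] μ[fun ω => A ω * Y ω|m])
    (hσ : (fun ω => (σ ω + q ω ^ 2) * G ω) =ᵐ[μ] μ[fun ω => A ω * Y ω ^ 2|m]) :
    μ[fun ω => A ω * (Y ω - q ω) ^ 2|m] =ᵐ[μ] fun ω => σ ω * G ω := by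
  have h2qC : ∀ ω, ‖2 * q ω‖ ≤ 2 * C := fun ω => by
    simpa [abs_mul] using mul_le_mul_of_nonneg_left (hqC ω) zero_le_two
  have hq2C : ∀ ω, ‖q ω ^ 2‖ ≤ C ^ 2 := fun ω => by
    simpa [abs_pow] using pow_le_pow_left₀ (abs_nonneg _) (hqC ω) 2
  have h2q : StronglyMeasurable[m] fun ω => 2 * q ω := (hq.const_mul 2).stronglyMeasurable
  have hq2 : StronglyMeasurable[m] fun ω => q ω ^ 2 := (hq.pow_const 2).stronglyMeasurable
  have hi2 : Integrable ((fun ω => 2 * q ω) * fun ω => A ω * Y ω) μ :=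
    hAYi.bdd_mul (h2q.mono hm).aestronglyMeasurable (ae_of_all _ h2qC)
  have hi3 : Integrable ((fun ω => q ω ^ 2) * A) μ :=
    hAi.bdd_mul (hq2.mono hm).aestronglyMeasurable (ae_of_all _ hq2C)
  have hsplit : (fun ω => A ω * (Y ω - q ω) ^ 2)
      = (fun ω => A ω * Y ω ^ 2) - (fun ω => 2 * q ω) * (fun ω => A ω * Y ω)
        + (fun ω => q ω ^ 2) * A := by
    ext ω; simp only [Pi.add_apply, Pi.sub_apply, Pi.mul_apply]; ring
  rw [hsplit]
  filter_upwards [condExp_add (hAY2i.sub hi2) hi3 m, condExp_sub hAY2i hi2 m,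
    condExp_stronglyMeasurable_mul_of_bound hm h2q hAYi _ (ae_of_all _ h2qC),
    condExp_stronglyMeasurable_mul_of_bound hm hq2 hAi _ (ae_of_all _ hq2C),
    hG, hqG, hσ] with ω hadd hsub hpull2 hpull3 hGω hqGω hσω
  simp only [Pi.add_apply, Pi.sub_apply, Pi.mul_apply] at hadd hsub hpull2 hpull3 ⊢
  rw [hadd, hsub, hpull2, hpull3, ← hGω, ← hqGω, ← hσω]
  ring

theorem integrable_of_add_sq_mul_ae_eq_condExp {f : Ω → ℝ} {δ : ℝ} (hδ : 0 < δ)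
    (hq : Measurable q) (hqr : ∀ ω, q ω ∈ Set.Icc (0 : ℝ) 1)
    (hG : Measurable G) (hGδ : ∀ ω, δ ≤ G ω)
    (hσ : (fun ω => (σ ω + q ω ^ 2) * G ω) =ᵐ[μ] μ[f|m]) :
    Integrable σ μ := by
  have hσq : Integrable (fun ω => σ ω + q ω ^ 2) μ :=
    (integrable_condExp.congr hσ.symm).of_mul_of_le hδ hG hGδ
  have hq2 : Integrable (fun ω => q ω ^ 2) μ :=
    .of_bound (hq.pow_const 2).aestronglyMeasurable 1 (ae_of_all _ fun ω => by
      obtain ⟨hq0, hq1⟩ := hqr ω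
      rw [Real.norm_eq_abs, abs_le]; constructor <;> nlinarith)
  exact (hσq.sub hq2).congr (ae_of_all _ fun ω => by simp only [Pi.sub_apply]; ring)

theorem integral_sq_aipw_eq (hm : m ≤ m0)
    (hA : Measurable A) (hAbin : ∀ ω, A ω = 0 ∨ A ω = 1)
    (hY : Measurable Y) (hYr : ∀ ω, Y ω ∈ Set.Icc (0 : ℝ) 1)
    (hq : Measurable[m] q) (hqr : ∀ ω, q ω ∈ Set.Icc (0 : ℝ) 1)
    (hG : G =ᵐ[μ] μ[A|m]) (hqG : (fun ω => q ω * G ω) =ᵐ[μ] μ[fun ω => A ω * Y ω|m])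
    (hσ : (fun ω => (σ ω + q ω ^ 2) * G ω) =ᵐ[μ] μ[fun ω => A ω * Y ω ^ 2|m])
    {g : Ω → ℝ} {δ : ℝ} (hδ : 0 < δ) (hg : Measurable[m] g) (hgδ : ∀ ω, δ ≤ g ω) (c : ℝ) :
    ∫ ω, (A ω / g ω * (Y ω - q ω) + q ω - c) ^ 2 ∂μ
      = ∫ ω, σ ω * G ω / g ω ^ 2 ∂μ + ∫ ω, (q ω - c) ^ 2 ∂μ := by
  have hq1 : ∀ ω, |q ω| ≤ 1 := fun ω => abs_le.2 ⟨by linarith [(hqr ω).1], (hqr ω).2⟩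
  have hqc : ∀ ω, |q ω - c| ≤ 1 + |c| := fun ω => (abs_sub _ _).trans (by linarith [hq1 ω])
  have hbounds : ∀ ω, |A ω| ≤ 1 ∧ |A ω * Y ω| ≤ 1 ∧ |A ω * Y ω ^ 2| ≤ 1
      ∧ |A ω * (Y ω - q ω)| ≤ 1 ∧ |A ω * (Y ω - q ω) ^ 2| ≤ 1 := fun ω => by
    obtain ⟨hY0, hY1⟩ := hYr ω
    obtain ⟨hq0, hq1⟩ := hqr ω
    rcases hAbin ω with h | h <;> rw [h] <;> refine ⟨?_, ?_, ?_, ?_, ?_⟩ <;> rw [abs_le] <;>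
      constructor <;> nlinarith
  have hq0 : Measurable q := hq.mono hm le_rfl
  have hAi : Integrable A μ :=
    .of_bound hA.aestronglyMeasurable 1 (ae_of_all _ fun ω => (hbounds ω).1)
  have hAYi : Integrable (fun ω => A ω * Y ω) μ :=
    .of_bound (hA.mul hY).aestronglyMeasurable 1 (ae_of_all _ fun ω => (hbounds ω).2.1)
  have hAY2i : Integrable (fun ω => A ω * Y ω ^ 2) μ :=
    .of_bound (hA.mul (hY.pow_const 2)).aestronglyMeasurable 1
      (ae_of_all _ fun ω => (hbounds ω).2.2.1)
  have hR1i : Integrable (fun ω => A ω * (Y ω - q ω)) μ :=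
    .of_bound (hA.mul (hY.sub hq0)).aestronglyMeasurable 1
      (ae_of_all _ fun ω => (hbounds ω).2.2.2.1)
  have hR2i : Integrable (fun ω => A ω * (Y ω - q ω) ^ 2) μ :=
    .of_bound (hA.mul ((hY.sub hq0).pow_const 2)).aestronglyMeasurable 1
      (ae_of_all _ fun ω => (hbounds ω).2.2.2.2)
  have hh1 : Measurable[m] fun ω => 1 / g ω ^ 2 := measurable_const.div (hg.pow_const 2)
  have hh2 : Measurable[m] fun ω => 2 * (q ω - c) / g ω :=
    ((hq.sub_const c).const_mul 2).div hg
  have hT1 : Integrable (fun ω => 1 / g ω ^ 2 * (A ω * (Y ω - q ω) ^ 2)) μ :=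
    hR2i.bdd_mul (hh1.mono hm le_rfl).aestronglyMeasurable (ae_of_all _ fun ω =>
      abs_div_le_div_of_le (pow_pos hδ 2) abs_one.le (pow_le_pow_left₀ hδ.le (hgδ ω) 2))
  have hT2 : Integrable (fun ω => 2 * (q ω - c) / g ω * (A ω * (Y ω - q ω))) μ :=
    hR1i.bdd_mul (hh2.mono hm le_rfl).aestronglyMeasurable (ae_of_all _ fun ω =>
      abs_div_le_div_of_le (a := 2 * (1 + |c|)) hδ
        (by rw [abs_mul, abs_two]; linarith [hqc ω]) (hgδ ω))
  have hT3 : Integrable (fun ω => (q ω - c) ^ 2) μ :=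
    .of_bound ((hq0.sub_const c).pow_const 2).aestronglyMeasurable ((1 + |c|) ^ 2)
      (ae_of_all _ fun ω => by
        rw [Real.norm_eq_abs, abs_pow]; exact pow_le_pow_left₀ (abs_nonneg _) (hqc ω) 2)
  have hexpand : ∀ ω, (A ω / g ω * (Y ω - q ω) + q ω - c) ^ 2
      = 1 / g ω ^ 2 * (A ω * (Y ω - q ω) ^ 2) + 2 * (q ω - c) / g ω * (A ω * (Y ω - q ω))
        + (q ω - c) ^ 2 := fun ω => by
    rcases hAbin ω with h | h <;> simp only [h] <;> ring
  calc ∫ ω, (A ω / g ω * (Y ω - q ω) + q ω - c) ^ 2 ∂μ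
      = ∫ ω, 1 / g ω ^ 2 * (A ω * (Y ω - q ω) ^ 2) ∂μ
        + ∫ ω, 2 * (q ω - c) / g ω * (A ω * (Y ω - q ω)) ∂μ + ∫ ω, (q ω - c) ^ 2 ∂μ := by
        rw [integral_congr_ae (ae_of_all _ hexpand), integral_add _ hT3, integral_add hT1 hT2]
        exact hT1.add hT2
    _ = ∫ ω, 1 / g ω ^ 2 * (σ ω * G ω) ∂μ
        + ∫ ω, 2 * (q ω - c) / g ω * (0 : Ω → ℝ) ω ∂μ + ∫ ω, (q ω - c) ^ 2 ∂μ := by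
        rw [integral_mul_eq_integral_mul_of_ae_eq_condExp hm hh1.stronglyMeasurable hT1 hR2i
            (condExp_mul_sub_sq_ae_eq hm hAi hAYi hAY2i hq hq1 hG hqG hσ).symm,
          integral_mul_eq_integral_mul_of_ae_eq_condExp hm hh2.stronglyMeasurable hT2 hR1i
            (condExp_mul_sub_ae_eq_zero hm hAi hAYi hq hq1 hG hqG).symm]
    _ = ∫ ω, σ ω * G ω / g ω ^ 2 ∂μ + ∫ ω, (q ω - c) ^ 2 ∂μ := by
        simp only [Pi.zero_apply, mul_zero, integral_zero, add_zero]
        congr 2 with ω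
        ring

end Residual

end CondExp

/-- Variance inequality for asymptotic super-efficiency (homoscedastic-within-strata case):
if `σ²(w) = Var(Y | A = 1, W = w)` is `σ(Q̄₀(W))`-measurable, then
`τ₀² = E[σ²(W)/Ḡ₀(W|Q̄₀)] + Var(Q̄₀(W)) ≤ E[σ²(W)/Ḡ₀(W)] + Var(Q̄₀(W)) = σ₀²`,
where `τ₀²`, `σ₀²` are the variances of the EIF evaluated with the adaptive propensity
`Ḡ₀(·|Q̄₀) = E[Ḡ₀(W)|Q̄₀(W)]` and the full propensity `Ḡ₀`, respectively. -/
theorem super_efficiency_variance_decomposition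
    {Ω 𝓦 : Type*} [MeasurableSpace Ω] [MeasurableSpace 𝓦]
    (P : Measure Ω) [IsProbabilityMeasure P]
    (W : Ω → 𝓦) (A Y : Ω → ℝ)
    (hW : Measurable W) (hA : Measurable A) (hY : Measurable Y)
    (hAbin : ∀ ω, A ω = 0 ∨ A ω = 1) (hYr : ∀ ω, Y ω ∈ Set.Icc (0:ℝ) 1)
    (δ : ℝ) (hδ : 0 < δ)
    (G0 Q0 : 𝓦 → ℝ) (hG0m : Measurable G0) (hQ0m : Measurable Q0)
    (hG0 : (fun ω => G0 (W ω)) =ᵐ[P] P[A | MeasurableSpace.comap W inferInstance])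
    (hG0r : ∀ w, G0 w ∈ Set.Icc δ 1)
    (hQ0G0 : (fun ω => Q0 (W ω) * G0 (W ω))
        =ᵐ[P] P[fun ω => A ω * Y ω | MeasurableSpace.comap W inferInstance])
    (hQ0r : ∀ w, Q0 w ∈ Set.Icc (0:ℝ) 1)
    -- σ²(w) = s(Q̄₀(w)) is σ(Q̄₀(W))-measurable: E[A Y² | W] = (σ² + Q̄₀²) Ḡ₀
    (s : ℝ → ℝ) (hsm : Measurable s) (hs0 : ∀ x, 0 ≤ s x)
    (hs : (fun ω => (s (Q0 (W ω)) + (Q0 (W ω)) ^ 2) * G0 (W ω))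
        =ᵐ[P] P[fun ω => A ω * (Y ω) ^ 2 | MeasurableSpace.comap W inferInstance])
    -- adaptive propensity Ḡ₀(·|Q̄₀) = E[Ḡ₀(W) | Q̄₀(W)]
    (Gq : ℝ → ℝ) (hGqm : Measurable Gq)
    (hGq : (fun ω => Gq (Q0 (W ω)))
        =ᵐ[P] P[fun ω => G0 (W ω) | MeasurableSpace.comap (fun ω => Q0 (W ω)) inferInstance])
    (hGqr : ∀ x, Gq x ∈ Set.Icc δ 1) :
    -- τ₀² = E[σ²/Ḡ₀(·|Q̄₀)] + Var(Q̄₀(W))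
    (∫ ω, (A ω / Gq (Q0 (W ω)) * (Y ω - Q0 (W ω)) + Q0 (W ω) - ∫ ω', Q0 (W ω') ∂P) ^ 2 ∂P
        = (∫ ω, s (Q0 (W ω)) / Gq (Q0 (W ω)) ∂P)
          + ∫ ω, (Q0 (W ω) - ∫ ω', Q0 (W ω') ∂P) ^ 2 ∂P)
    -- σ₀² = E[σ²/Ḡ₀] + Var(Q̄₀(W))
    ∧ (∫ ω, (A ω / G0 (W ω) * (Y ω - Q0 (W ω)) + Q0 (W ω) - ∫ ω', Q0 (W ω') ∂P) ^ 2 ∂P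
        = (∫ ω, s (Q0 (W ω)) / G0 (W ω) ∂P)
          + ∫ ω, (Q0 (W ω) - ∫ ω', Q0 (W ω') ∂P) ^ 2 ∂P)
    -- and τ₀² ≤ σ₀²
    ∧ ((∫ ω, s (Q0 (W ω)) / Gq (Q0 (W ω)) ∂P)
          + (∫ ω, (Q0 (W ω) - ∫ ω', Q0 (W ω') ∂P) ^ 2 ∂P)
        ≤ (∫ ω, s (Q0 (W ω)) / G0 (W ω) ∂P)
          + ∫ ω, (Q0 (W ω) - ∫ ω', Q0 (W ω') ∂P) ^ 2 ∂P) := by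
  have hmW : MeasurableSpace.comap W inferInstance ≤ ‹MeasurableSpace Ω› := hW.comap_le
  have hmQ : MeasurableSpace.comap (fun ω => Q0 (W ω)) inferInstance ≤ ‹MeasurableSpace Ω› :=
    (hQ0m.comp hW).comap_le
  have hq : Measurable[MeasurableSpace.comap W inferInstance] fun ω => Q0 (W ω) :=
    hQ0m.comp (comap_measurable W)
  have hσ : Measurable[MeasurableSpace.comap (fun ω => Q0 (W ω)) inferInstance]
      fun ω => s (Q0 (W ω)) := hsm.comp (comap_measurable _)
  have hGc : Measurable[MeasurableSpace.comap (fun ω => Q0 (W ω)) inferInstance]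
      fun ω => Gq (Q0 (W ω)) := hGqm.comp (comap_measurable _)
  have hG : Measurable fun ω => G0 (W ω) := hG0m.comp hW
  have hG1 : ∀ ω, |G0 (W ω)| ≤ 1 := fun ω =>
    abs_le.2 ⟨by linarith [(hG0r (W ω)).1], (hG0r (W ω)).2⟩
  have hGqδ : ∀ ω, δ ≤ Gq (Q0 (W ω)) := fun ω => (hGqr _).1
  have hσi : Integrable (fun ω => s (Q0 (W ω))) P :=
    integrable_of_add_sq_mul_ae_eq_condExp hδ (hQ0m.comp hW) (fun ω => hQ0r (W ω)) hG
      (fun ω => (hG0r (W ω)).1) hs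
  have hdecomp := fun g hg hgδ => integral_sq_aipw_eq hmW hA hAbin hY hYr hq
    (fun ω => hQ0r (W ω)) hG0 hQ0G0 hs hδ (g := g) hg hgδ (∫ ω', Q0 (W ω') ∂P)
  refine ⟨?_, ?_, add_le_add (integral_div_le_integral_div_of_ae_eq_condExp hmQ hδ hσ
    hσi (fun ω => hs0 _) hG (fun ω => hG0r (W ω)) hGc hGqδ hGq) le_rfl⟩
  · rw [hdecomp (fun ω => Gq (Q0 (W ω))) (hGqm.comp hq) hGqδ,
      integral_mul_div_sq_eq_integral_div_of_ae_eq_condExp hmQ hδ hσ hσi hG hG1 hGc hGqδ hGq]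
  · rw [hdecomp (fun ω => G0 (W ω)) (hG0m.comp (comap_measurable W)) fun ω => (hG0r (W ω)).1]
    congr 2 with ω
    field_simp [(hδ.trans_le (hG0r (W ω)).1).ne']
end
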